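/- arXiv:1809.07432 — 2 statements merged into one kernel-verified Lean document; each statement's English description precedes it below -/
import Mathlib

section
/- The set of functions Q̃ : Ω → ℝ (Ω ⊆ ℝᵈ open) that are C⁴, uniformly convex (D²Q̃ ≥ ε₀ I for some ε₀ > 0 allowed to depend on Q̃), and satisfy condition (H2c): Σ (D⁴_{ijrs}Q̃) Q̃^{rk}Q̃^{sl} ξ_kξ_lη_iη_j ≤ 0 for all ξ, η ∈ ℝᵈ, is convex: if Q̃ and Q̃′ both belong to this set, then so does τQ̃ + (1−τ)Q̃′ for every τ ∈ [0,1]. -/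
noncomputable section

/-- Partial derivative in the `k`-th coordinate direction. -/
def pd {d : ℕ} (k : Fin d) (f : (Fin d → ℝ) → ℝ) (z : Fin d → ℝ) : ℝ :=
  fderiv ℝ f z (Pi.single k 1)

/-- Hessian matrix. -/
def Hess {d : ℕ} (f : (Fin d → ℝ) → ℝ) (z : Fin d → ℝ) : Matrix (Fin d) (Fin d) ℝ :=
  Matrix.of fun i j => pd i (fun w => pd j f w) z

/-- Fourth partial derivatives. -/
def D4 {d : ℕ} (f : (Fin d → ℝ) → ℝ) (a b c e : Fin d) (z : Fin d → ℝ) : ℝ :=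
  pd a (fun w => pd b (fun w' => pd c (fun w'' => pd e f w'') w') w) z

/-- A potential on `Ω` is good if it is `C⁴`, uniformly convex, and satisfies (H2c):
`Σ (D⁴_{ijrs}Q̃) Q̃^{rk} Q̃^{sl} ξ_k ξ_l η_i η_j ≤ 0` for all `ξ, η`. -/
def GoodPotential {d : ℕ} (Ω : Set (Fin d → ℝ)) (f : (Fin d → ℝ) → ℝ) : Prop :=
  ContDiffOn ℝ 4 f Ω ∧
  (∃ ε₀ > 0, ∀ z ∈ Ω, ∀ v : Fin d → ℝ,
    ε₀ * ∑ i, v i ^ 2 ≤ ∑ i, ∑ j, Hess f z i j * v i * v j) ∧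
  (∀ z ∈ Ω, ∀ ξ η : Fin d → ℝ,
    (∑ i, ∑ j, ∑ k, ∑ l,
      (∑ r, ∑ s, D4 f i j r s z * (Hess f z)⁻¹ r k * (Hess f z)⁻¹ s l)
        * ξ k * ξ l * η i * η j) ≤ 0)


/-! Derivatives are linear in the potential, so the Hessian and the fourth derivatives of
`τ f + (1 - τ) g` are the convex combinations of those of `f` and `g`. Uniform convexity passes to
the combination with constant `min ε_f ε_g`, which also makes its Hessian invertible. Condition
(H2c) is not linear in the potential because of the inverse Hessians; but for an invertible `H`
the vector `H⁻¹ ξ` ranges over all of `ℝᵈ`, so (H2c) is equivalent to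
`Σ D⁴_{ijkl} ζ_k ζ_l η_i η_j ≤ 0` for all `ζ, η`, which is linear in `D⁴` and hence stable under
convex combinations. -/

open Matrix Set

section QuadraticForms

variable {n R : Type*} [Fintype n] [CommRing R]

lemma sum_mul_mul_eq_dotProduct_mulVec (M : Matrix n n R) (v : n → R) :
    ∑ i, ∑ j, M i j * v i * v j = v ⬝ᵥ (M *ᵥ v) := by
  simp only [dotProduct, mulVec, Finset.mul_sum]
  exact Finset.sum_congr rfl fun _ _ => Finset.sum_congr rfl fun _ _ => by ring

lemma transpose_mul_mul_apply (A M : Matrix n n R) (k l : n) :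
    (Mᵀ * A * M) k l = ∑ r, ∑ s, A r s * M r k * M s l := by
  simp only [mul_apply, transpose_apply, Finset.sum_mul]
  rw [Finset.sum_comm]
  exact Finset.sum_congr rfl fun _ _ => Finset.sum_congr rfl fun _ _ => by ring

lemma sum_transpose_mul_mul_eq_sum_mulVec (A M : Matrix n n R) (ξ : n → R) :
    ∑ k, ∑ l, (∑ r, ∑ s, A r s * M r k * M s l) * ξ k * ξ l
      = ∑ r, ∑ s, A r s * (M *ᵥ ξ) r * (M *ᵥ ξ) s := by
  simp only [← transpose_mul_mul_apply, sum_mul_mul_eq_dotProduct_mulVec]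
  rw [← mulVec_mulVec, ← mulVec_mulVec, dotProduct_mulVec, vecMul_transpose]

def biquadraticForm (D : n → n → n → n → R) (ζ η : n → R) : R :=
  ∑ i, ∑ j, ∑ r, ∑ s, D i j r s * ζ r * ζ s * η i * η j

lemma biquadraticForm_linComb (D D' : n → n → n → n → R) (a b : R) (ζ η : n → R) :
    biquadraticForm (fun i j r s => a * D i j r s + b * D' i j r s) ζ η
      = a * biquadraticForm D ζ η + b * biquadraticForm D' ζ η := by
  simp only [biquadraticForm, Finset.mul_sum, ← Finset.sum_add_distrib]
  exact Finset.sum_congr rfl fun _ _ => Finset.sum_congr rfl fun _ _ =>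
    Finset.sum_congr rfl fun _ _ => Finset.sum_congr rfl fun _ _ => by ring

lemma sum_contract_eq_biquadraticForm_mulVec (D : n → n → n → n → R) (M : Matrix n n R)
    (ξ η : n → R) :
    ∑ i, ∑ j, ∑ k, ∑ l, (∑ r, ∑ s, D i j r s * M r k * M s l) * ξ k * ξ l * η i * η j
      = biquadraticForm D (M *ᵥ ξ) η := by
  refine Finset.sum_congr rfl fun i _ => Finset.sum_congr rfl fun j _ => ?_
  have h := congrArg (· * η i * η j) (sum_transpose_mul_mul_eq_sum_mulVec (of (D i j)) M ξ)
  simpa only [Finset.sum_mul, of_apply] using h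

lemma forall_sum_contract_inv_nonpos_iff [LE R] [DecidableEq n]
    (D : n → n → n → n → R) {M : Matrix n n R} (hM : IsUnit M) :
    (∀ ξ η : n → R,
      ∑ i, ∑ j, ∑ k, ∑ l, (∑ r, ∑ s, D i j r s * M⁻¹ r k * M⁻¹ s l) * ξ k * ξ l * η i * η j ≤ 0)
      ↔ ∀ ζ η, biquadraticForm D ζ η ≤ 0 := by
  simp only [sum_contract_eq_biquadraticForm_mulVec]
  exact ((mulVec_surjective_iff_isUnit.2 (isUnit_nonsing_inv_iff.2 hM)).forall
    (p := fun ζ => ∀ η, biquadraticForm D ζ η ≤ 0)).symm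

lemma uniform_lower_bound_linComb [LinearOrder R] [IsStrictOrderedRing R]
    {A B : Matrix n n R} {εA εB τ : R} (hτ : τ ∈ Icc (0 : R) 1)
    (hA : ∀ v : n → R, εA * ∑ i, v i ^ 2 ≤ ∑ i, ∑ j, A i j * v i * v j)
    (hB : ∀ v : n → R, εB * ∑ i, v i ^ 2 ≤ ∑ i, ∑ j, B i j * v i * v j) (v : n → R) :
    min εA εB * ∑ i, v i ^ 2 ≤ ∑ i, ∑ j, (τ • A + (1 - τ) • B) i j * v i * v j := by
  have hv : 0 ≤ ∑ i, v i ^ 2 := Finset.sum_nonneg fun i _ => sq_nonneg (v i)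
  have hA' := mul_le_mul_of_nonneg_left (hA v) hτ.1
  have hB' := mul_le_mul_of_nonneg_left (hB v) (sub_nonneg.2 hτ.2)
  have hminA := mul_le_mul_of_nonneg_left
    (mul_le_mul_of_nonneg_right (min_le_left εA εB) hv) hτ.1
  have hminB := mul_le_mul_of_nonneg_left
    (mul_le_mul_of_nonneg_right (min_le_right εA εB) hv) (sub_nonneg.2 hτ.2)
  simp only [sum_mul_mul_eq_dotProduct_mulVec, add_mulVec, smul_mulVec, dotProduct_add,
    dotProduct_smul, smul_eq_mul] at hA' hB' ⊢
  linarith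

end QuadraticForms

lemma isUnit_of_uniform_lower_bound {n 𝕜 : Type*} [Fintype n] [DecidableEq n] [Field 𝕜]
    [LinearOrder 𝕜] [IsStrictOrderedRing 𝕜] {M : Matrix n n 𝕜} {ε : 𝕜} (hε : 0 < ε)
    (hM : ∀ v : n → 𝕜, ε * ∑ i, v i ^ 2 ≤ ∑ i, ∑ j, M i j * v i * v j) : IsUnit M := by
  refine mulVec_injective_iff_isUnit.1 <|
    (injective_iff_map_eq_zero (mulVecLin M)).2 fun v hv => ?_
  rw [mulVecLin_apply] at hv
  have h := hM v
  have hvv : ∑ i, v i ^ 2 = v ⬝ᵥ v := by simp only [dotProduct, sq]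
  rw [sum_mul_mul_eq_dotProduct_mulVec, hv, dotProduct_zero, hvv] at h
  exact dotProduct_self_eq_zero.1 <| le_antisymm (nonpos_of_mul_nonpos_right h hε)
    (Finset.sum_nonneg fun i _ => mul_self_nonneg (v i))

section PartialDerivatives

variable {d : ℕ} {Ω : Set (Fin d → ℝ)}

lemma contDiffOn_pd (hΩ : IsOpen Ω) {f : (Fin d → ℝ) → ℝ} {m n : WithTop ℕ∞}
    (hf : ContDiffOn ℝ n f Ω) (hmn : m + 1 ≤ n) (k : Fin d) : ContDiffOn ℝ m (pd k f) Ω :=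
  (hf.fderiv_of_isOpen hΩ hmn).clm_apply contDiffOn_const

lemma eqOn_pd_of_eqOn_linComb (hΩ : IsOpen Ω) {F G H : (Fin d → ℝ) → ℝ} {a b : ℝ}
    (hF : DifferentiableOn ℝ F Ω) (hG : DifferentiableOn ℝ G Ω)
    (hH : EqOn H (fun w => a * F w + b * G w) Ω) (k : Fin d) :
    EqOn (pd k H) (fun w => a * pd k F w + b * pd k G w) Ω := by
  intro z hz
  have hFz := hF.differentiableAt (hΩ.mem_nhds hz)
  have hGz := hG.differentiableAt (hΩ.mem_nhds hz)
  simp only [pd]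
  rw [(hH.eventuallyEq_of_mem (hΩ.mem_nhds hz)).fderiv_eq,
    fderiv_fun_add (hFz.const_mul a) (hGz.const_mul b), fderiv_const_mul hFz, fderiv_const_mul hGz]
  simp

variable {f g : (Fin d → ℝ) → ℝ} {a b : ℝ}

lemma hess_linComb (hΩ : IsOpen Ω) (hf : ContDiffOn ℝ 2 f Ω) (hg : ContDiffOn ℝ 2 g Ω) :
    ∀ z ∈ Ω, Hess (fun w => a * f w + b * g w) z = a • Hess f z + b • Hess g z := by
  have h1 := eqOn_pd_of_eqOn_linComb hΩ (hf.differentiableOn two_ne_zero)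
    (hg.differentiableOn two_ne_zero) (eqOn_refl (fun w => a * f w + b * g w) Ω)
  intro z hz
  ext i j
  exact eqOn_pd_of_eqOn_linComb hΩ ((contDiffOn_pd hΩ hf le_rfl j).differentiableOn one_ne_zero)
    ((contDiffOn_pd hΩ hg le_rfl j).differentiableOn one_ne_zero) (h1 j) i hz

lemma D4_linComb (hΩ : IsOpen Ω) (hf : ContDiffOn ℝ 4 f Ω) (hg : ContDiffOn ℝ 4 g Ω)
    (i j r s : Fin d) :
    EqOn (D4 (fun w => a * f w + b * g w) i j r s)
      (fun z => a * D4 f i j r s z + b * D4 g i j r s z) Ω := by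
  have hf3 := contDiffOn_pd hΩ hf (m := 3) (by norm_num) s
  have hg3 := contDiffOn_pd hΩ hg (m := 3) (by norm_num) s
  have hf2 := contDiffOn_pd hΩ hf3 (m := 2) (by norm_num) r
  have hg2 := contDiffOn_pd hΩ hg3 (m := 2) (by norm_num) r
  have hf1 := contDiffOn_pd hΩ hf2 (m := 1) (by norm_num) j
  have hg1 := contDiffOn_pd hΩ hg2 (m := 1) (by norm_num) j
  have h1 := eqOn_pd_of_eqOn_linComb hΩ (hf.differentiableOn (by norm_num))
    (hg.differentiableOn (by norm_num)) (eqOn_refl (fun w => a * f w + b * g w) Ω) s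
  have h2 := eqOn_pd_of_eqOn_linComb hΩ (hf3.differentiableOn (by norm_num))
    (hg3.differentiableOn (by norm_num)) h1 r
  have h3 := eqOn_pd_of_eqOn_linComb hΩ (hf2.differentiableOn (by norm_num))
    (hg2.differentiableOn (by norm_num)) h2 j
  exact eqOn_pd_of_eqOn_linComb hΩ (hf1.differentiableOn (by norm_num))
    (hg1.differentiableOn (by norm_num)) h3 i

end PartialDerivatives

/-- The set of `C⁴`, uniformly convex potentials satisfying (H2c) is convex. -/
theorem stmt7 {d : ℕ} (Ω : Set (Fin d → ℝ)) (hΩ : IsOpen Ω)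
    (f g : (Fin d → ℝ) → ℝ) (hf : GoodPotential Ω f) (hg : GoodPotential Ω g)
    (τ : ℝ) (hτ : τ ∈ Set.Icc (0 : ℝ) 1) :
    GoodPotential Ω (fun z => τ * f z + (1 - τ) * g z) := by
  obtain ⟨hf4, ⟨εf, hεf, hf_conv⟩, hf_H2c⟩ := hf
  obtain ⟨hg4, ⟨εg, hεg, hg_conv⟩, hg_H2c⟩ := hg
  have h_conv : ∀ z ∈ Ω, ∀ v : Fin d → ℝ, min εf εg * ∑ i, v i ^ 2 ≤
      ∑ i, ∑ j, Hess (fun w => τ * f w + (1 - τ) * g w) z i j * v i * v j := fun z hz v => by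
    rw [hess_linComb hΩ (hf4.of_le (by norm_num)) (hg4.of_le (by norm_num)) z hz]
    exact uniform_lower_bound_linComb hτ (hf_conv z hz) (hg_conv z hz) v
  refine ⟨(contDiffOn_const.mul hf4).add (contDiffOn_const.mul hg4),
    ⟨_, lt_min hεf hεg, h_conv⟩, fun z hz => ?_⟩
  have hf_lin := (forall_sum_contract_inv_nonpos_iff _
    (isUnit_of_uniform_lower_bound hεf (hf_conv z hz))).1 (hf_H2c z hz)
  have hg_lin := (forall_sum_contract_inv_nonpos_iff _
    (isUnit_of_uniform_lower_bound hεg (hg_conv z hz))).1 (hg_H2c z hz)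
  refine (forall_sum_contract_inv_nonpos_iff _
    (isUnit_of_uniform_lower_bound (lt_min hεf hεg) (h_conv z hz))).2 fun ζ η => ?_
  have hD4 : (fun i j r s => D4 (fun w => τ * f w + (1 - τ) * g w) i j r s z) =
      fun i j r s => τ * D4 f i j r s z + (1 - τ) * D4 g i j r s z := by
    funext i j r s
    exact D4_linComb hΩ hf4 hg4 i j r s hz
  rw [hD4, biquadraticForm_linComb]
  exact add_nonpos (mul_nonpos_of_nonneg_of_nonpos hτ.1 (hf_lin ζ η))
    (mul_nonpos_of_nonneg_of_nonpos (sub_nonneg.2 hτ.2) (hg_lin ζ η))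
end
end

section
/- Let m ∈ (0,1) and let ξ, η be unit vectors in ℝᵈ, z ∈ ℝᵈ \ {0}. Then the quantity E := 1 − (m/(m−1))(z·η/|z|)² − m(z·ξ/|z|)² + (m(3m−2)/(m−1))(z·ξ/|z|)²(z·η/|z|)² + (m−1)(ξ·η)² is strictly positive. Equivalently, writing E = I + II with I := 1 − m(z·ξ/|z|)² + (m−1)(ξ·η)² and II := (m/(1−m))(z·η/|z|)²[1 − (3m−2)(z·ξ/|z|)²], both I ≥ 0 and II ≥ 0, and they cannot vanish simultaneously. -/
/-!
With `a = z·ξ/|z|`, `b = z·η/|z|`, `e = ξ·η`, Cauchy–Schwarz gives `a² ≤ 1` and `e² ≤ 1`.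
Then `I` is a convex combination of `1 - a²` and `1 - e²`, and the factor
`1 - (3m - 2) a²` of `II` is at least `min 1 (3 - 3m) > 0`. If `I = 0`, then `e² = 1`, so
`η = ±ξ` and `b = e a` has `b² = a² = 1`, which makes `II` strictly positive.
-/

open Set

theorem eq_inner_smul_of_inner_sq_eq_one {F : Type*} [NormedAddCommGroup F]
    [InnerProductSpace ℝ F] {x y : F} (hx : ‖x‖ = 1) (hy : ‖y‖ = 1)
    (hxy : inner ℝ x y ^ 2 = 1) : y = inner ℝ x y • x := by
  have h : ‖y - inner ℝ x y • x‖ ^ 2 = 0 := by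
    rw [norm_sub_sq_real, norm_smul, real_inner_smul_right, real_inner_comm x y, hx, hy,
      Real.norm_eq_abs, mul_one, sq_abs]
    linear_combination -hxy
  simpa [sub_eq_zero] using h

theorem sq_inner_div_norm_le_one {F : Type*} [NormedAddCommGroup F] [InnerProductSpace ℝ F]
    (x : F) {y : F} (hy : ‖y‖ = 1) : (inner ℝ x y / ‖x‖) ^ 2 ≤ 1 := by
  have h := abs_real_inner_div_norm_mul_norm_le_one x y
  rw [hy, mul_one] at h
  exact sq_le_one_iff_abs_le_one _ |>.mpr h

def mtwTermI (m a e : ℝ) : ℝ := 1 - m * a ^ 2 + (m - 1) * e ^ 2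

noncomputable def mtwTermII (m a b : ℝ) : ℝ := (m / (1 - m)) * b ^ 2 * (1 - (3 * m - 2) * a ^ 2)

section Algebra

variable {m a b e : ℝ}

theorem mtwTermI_nonneg (hm : m ∈ Ioo 0 1) (ha : a ^ 2 ≤ 1) (he : e ^ 2 ≤ 1) :
    0 ≤ mtwTermI m a e := by
  unfold mtwTermI
  nlinarith [hm.1, hm.2]

theorem sq_eq_one_of_mtwTermI_eq_zero (hm : m ∈ Ioo 0 1) (ha : a ^ 2 ≤ 1) (he : e ^ 2 ≤ 1)
    (h : mtwTermI m a e = 0) : a ^ 2 = 1 ∧ e ^ 2 = 1 := by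
  unfold mtwTermI at h
  obtain ⟨hm0, hm1⟩ := hm
  constructor <;> nlinarith

theorem one_sub_three_mul_sub_two_mul_sq_pos (hm : m < 1) (ha : a ^ 2 ≤ 1) :
    0 < 1 - (3 * m - 2) * a ^ 2 := by
  rcases le_or_gt (3 * m - 2) 0 with h | h <;> nlinarith [sq_nonneg a]

theorem mtwTermII_nonneg (hm : m ∈ Ioo 0 1) (ha : a ^ 2 ≤ 1) : 0 ≤ mtwTermII m a b := by
  have := div_pos hm.1 (sub_pos.2 hm.2)
  have := one_sub_three_mul_sub_two_mul_sq_pos hm.2 ha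
  unfold mtwTermII
  positivity

theorem mtwTermII_pos (hm : m ∈ Ioo 0 1) (ha : a ^ 2 ≤ 1) (hb : b ≠ 0) :
    0 < mtwTermII m a b := by
  have := div_pos hm.1 (sub_pos.2 hm.2)
  have := one_sub_three_mul_sub_two_mul_sq_pos hm.2 ha
  unfold mtwTermII
  positivity

theorem mtw_bracket_eq_mtwTermI_add_mtwTermII (hm : m ≠ 1) :
    1 - (m / (m - 1)) * b ^ 2 - m * a ^ 2 + (m * (3 * m - 2) / (m - 1)) * a ^ 2 * b ^ 2
      + (m - 1) * e ^ 2 = mtwTermI m a e + mtwTermII m a b := by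
  have : m - 1 ≠ 0 := sub_ne_zero.2 hm
  have : 1 - m ≠ 0 := sub_ne_zero.2 hm.symm
  unfold mtwTermI mtwTermII
  field_simp
  ring

end Algebra

theorem stmt13_general {d : ℕ} (m : ℝ) (hm : m ∈ Set.Ioo (0 : ℝ) 1)
    (ξ η z : EuclideanSpace ℝ (Fin d)) (hξ : ‖ξ‖ = 1) (hη : ‖η‖ = 1) :
    let a : ℝ := (inner ℝ z ξ : ℝ) / ‖z‖
    let b : ℝ := (inner ℝ z η : ℝ) / ‖z‖
    let e : ℝ := (inner ℝ ξ η : ℝ)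
    let E : ℝ := 1 - (m / (m - 1)) * b ^ 2 - m * a ^ 2
      + (m * (3 * m - 2) / (m - 1)) * a ^ 2 * b ^ 2 + (m - 1) * e ^ 2
    let I : ℝ := 1 - m * a ^ 2 + (m - 1) * e ^ 2
    let II : ℝ := (m / (1 - m)) * b ^ 2 * (1 - (3 * m - 2) * a ^ 2)
    0 < E ∧ E = I + II ∧ 0 ≤ I ∧ 0 ≤ II ∧ ¬(I = 0 ∧ II = 0) := by
  intro a b e E I II
  have ha : a ^ 2 ≤ 1 := sq_inner_div_norm_le_one z hξ
  have he : e ^ 2 ≤ 1 := by simpa [hξ] using sq_inner_div_norm_le_one ξ hη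
  have hI : 0 ≤ I := mtwTermI_nonneg hm ha he
  have hII : 0 ≤ II := mtwTermII_nonneg hm ha
  have hE : E = I + II := mtw_bracket_eq_mtwTermI_add_mtwTermII hm.2.ne
  have hnot : ¬(I = 0 ∧ II = 0) := by
    rintro ⟨hI0, hII0⟩
    obtain ⟨ha1, he1⟩ := sq_eq_one_of_mtwTermI_eq_zero hm ha he hI0
    have hηξ : η = e • ξ := eq_inner_smul_of_inner_sq_eq_one hξ hη he1
    have hb : b = e * a := by
      simp only [b, a, hηξ, real_inner_smul_right, mul_div_assoc]
    have hb1 : b ^ 2 = 1 := by rw [hb, mul_pow, ha1, he1, one_mul]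
    have hb0 : b ≠ 0 := ne_zero_pow two_ne_zero (hb1 ▸ one_ne_zero)
    exact (mtwTermII_pos hm ha hb0).ne' hII0
  refine ⟨?_, hE, hI, hII, hnot⟩
  rw [hE]
  exact (add_nonneg hI hII).lt_of_ne fun h => hnot ((add_eq_zero_iff_of_nonneg hI hII).1 h.symm)

/-- The bracketed expression in the MTW tensor of the Coulomb-type cost is strictly
positive: for `m ∈ (0,1)`, unit vectors `ξ, η` and `z ≠ 0`, with
`a = z·ξ/|z|`, `b = z·η/|z|`, `e = ξ·η`, the quantity `E` is positive, `E = I + II`,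
`I ≥ 0`, `II ≥ 0`, and `I`, `II` cannot vanish simultaneously. -/
theorem stmt13 {d : ℕ} (m : ℝ) (hm : m ∈ Set.Ioo (0 : ℝ) 1)
    (ξ η z : EuclideanSpace ℝ (Fin d)) (hξ : ‖ξ‖ = 1) (hη : ‖η‖ = 1) (hz : z ≠ 0) :
    let a : ℝ := (inner ℝ z ξ : ℝ) / ‖z‖
    let b : ℝ := (inner ℝ z η : ℝ) / ‖z‖
    let e : ℝ := (inner ℝ ξ η : ℝ)
    let E : ℝ := 1 - (m / (m - 1)) * b ^ 2 - m * a ^ 2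
      + (m * (3 * m - 2) / (m - 1)) * a ^ 2 * b ^ 2 + (m - 1) * e ^ 2
    let I : ℝ := 1 - m * a ^ 2 + (m - 1) * e ^ 2
    let II : ℝ := (m / (1 - m)) * b ^ 2 * (1 - (3 * m - 2) * a ^ 2)
    0 < E ∧ E = I + II ∧ 0 ≤ I ∧ 0 ≤ II ∧ ¬(I = 0 ∧ II = 0) :=
  stmt13_general m hm ξ η z hξ hη
end
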